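/- arXiv:1302.2359 — 5 statements merged into one kernel-verified Lean document; each statement's English description precedes it below -/
import Mathlib

section
/- For |q|<1, the Euler product E(q) = ∏_{n≥1}(1-q^n) satisfies the pentagonal number theorem: E(q) = ∑_{n∈ℤ} (-1)^n q^{n(3n-1)/2}. -/
open scoped BigOperators

noncomputable def E (q : ℂ) : ℂ := ∏' n : ℕ, (1 - q ^ (n + 1))

noncomputable def ramaf (a b : ℂ) : ℂ :=
  ∑' n : ℤ, a ^ (n * (n + 1) / 2) * b ^ (n * (n - 1) / 2)

noncomputable def phi (q : ℂ) : ℂ := ∑' n : ℤ, q ^ (n ^ 2)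

noncomputable def psi (q : ℂ) : ℂ := ∑' n : ℤ, q ^ (2 * n ^ 2 - n)

/-!
Mathlib's `Pentagonal.tprod_one_sub_pow` proves Euler's identity in any topological ring, provided
the series and products of its telescoping argument converge and its remainder term tends to zero.
For `‖x‖ < 1` in a complete normed ring each of these follows by comparison with the geometric
series `∑ ‖x‖ ^ n`, since a finite product `∏ (1 - x ^ e i)` over distinct exponents has norm at
most `exp (1 - ‖x‖)⁻¹`. The sum over `ℤ` is then the sum over `ℕ` regrouped into the pairs `-k, k + 1`.
-/

open Filter Topology Finset

theorem natAbs_le_pentagonal (k : ℤ) : k.natAbs ≤ pentagonal k := by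
  have h := two_mul_natCast_pentagonal k
  zify
  rcases le_or_gt k 0 with hk | hk
  · rw [abs_of_nonpos hk]; nlinarith
  · rw [abs_of_pos hk]; nlinarith

section NormedCommRing

variable {R : Type*} [NormedCommRing R] [NormOneClass R] {x : R}

theorem norm_pow_le_pow_of_le (hx : ‖x‖ < 1) {m n : ℕ} (hmn : m ≤ n) : ‖x ^ n‖ ≤ ‖x‖ ^ m :=
  (norm_pow_le x n).trans (pow_le_pow_of_le_one (norm_nonneg x) hx.le hmn)

theorem norm_neg_one_pow_le (n : ℕ) : ‖(-1 : R) ^ n‖ ≤ 1 :=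
  (norm_pow_le _ n).trans (by rw [norm_neg, norm_one, one_pow])

theorem norm_prod_one_sub_pow_le (hx : ‖x‖ < 1) (s : Finset ℕ) (e : ℕ → ℕ) (he : e.Injective) :
    ‖∏ i ∈ s, (1 - x ^ e i)‖ ≤ Real.exp (1 - ‖x‖)⁻¹ := by
  have hgeom : ∑ i ∈ s, ‖-x ^ e i‖ ≤ (1 - ‖x‖)⁻¹ := calc
    ∑ i ∈ s, ‖-x ^ e i‖ ≤ ∑ i ∈ s, ‖x‖ ^ e i := sum_le_sum fun i _ => by
      rw [norm_neg]; exact norm_pow_le x _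
    _ = ∑ j ∈ s.image e, ‖x‖ ^ j := (sum_image fun _ _ _ _ h => he h).symm
    _ ≤ ∑' j, ‖x‖ ^ j :=
      (summable_geometric_of_lt_one (norm_nonneg x) hx).sum_le_tsum _ fun _ _ => by positivity
    _ = (1 - ‖x‖)⁻¹ := tsum_geometric_of_lt_one (norm_nonneg x) hx
  calc ‖∏ i ∈ s, (1 - x ^ e i)‖ = ‖∏ i ∈ s, (1 + -x ^ e i) - 1 + 1‖ := by
        simp only [sub_eq_add_neg, neg_add_cancel_right]
    _ ≤ Real.exp (∑ i ∈ s, ‖-x ^ e i‖) - 1 + ‖(1 : R)‖ :=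
        (norm_add_le _ _).trans (by gcongr; exact s.norm_prod_one_add_sub_one_le _)
    _ ≤ Real.exp (1 - ‖x‖)⁻¹ := by
        rw [norm_one, sub_add_cancel]; exact Real.exp_le_exp.2 hgeom

theorem norm_pow_mul_prod_one_sub_pow_le (hx : ‖x‖ < 1) (k n : ℕ) :
    ‖x ^ ((k + 1) * n) * ∏ i ∈ range (n + 1), (1 - x ^ (k + i + 1))‖ ≤
      Real.exp (1 - ‖x‖)⁻¹ * ‖x‖ ^ n := by
  rw [mul_comm _ (‖x‖ ^ n)]
  refine (norm_mul_le _ _).trans (mul_le_mul (norm_pow_le_pow_of_le hx (by nlinarith))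
    (norm_prod_one_sub_pow_le hx _ _ fun i j h => by omega) (norm_nonneg _) (by positivity))

theorem norm_tsum_pow_mul_prod_one_sub_pow_le (hx : ‖x‖ < 1) (k : ℕ) :
    ‖∑' n, x ^ ((k + 1) * n) * ∏ i ∈ range (n + 1), (1 - x ^ (k + i + 1))‖ ≤
      Real.exp (1 - ‖x‖)⁻¹ * (1 - ‖x‖)⁻¹ :=
  tsum_of_norm_bounded ((hasSum_geometric_of_lt_one (norm_nonneg x) hx).mul_left _)
    (norm_pow_mul_prod_one_sub_pow_le hx k)

theorem tendsto_pentagonal_remainder (hx : ‖x‖ < 1) :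
    Tendsto (fun k => (-1) ^ (k + 1) * x ^ ((k + 1) * (3 * k + 4) / 2) *
      ∑' n, x ^ ((k + 1) * n) * ∏ i ∈ range (n + 1), (1 - x ^ (k + i + 1))) atTop (𝓝 0) := by
  have hlim : Tendsto (fun k => ‖x‖ ^ k * (Real.exp (1 - ‖x‖)⁻¹ * (1 - ‖x‖)⁻¹)) atTop (𝓝 0) := by
    simpa using (tendsto_pow_atTop_nhds_zero_of_lt_one (norm_nonneg x) hx).mul_const
      (Real.exp (1 - ‖x‖)⁻¹ * (1 - ‖x‖)⁻¹)
  refine squeeze_zero_norm (fun k => ?_) hlim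
  have hexp : k ≤ (k + 1) * (3 * k + 4) / 2 := (Nat.le_div_iff_mul_le two_pos).2 (by nlinarith)
  calc _ ≤ ‖(-1 : R) ^ (k + 1)‖ * ‖x ^ ((k + 1) * (3 * k + 4) / 2)‖ *
        ‖∑' n, x ^ ((k + 1) * n) * ∏ i ∈ range (n + 1), (1 - x ^ (k + i + 1))‖ :=
        (norm_mul_le _ _).trans (mul_le_mul_of_nonneg_right (norm_mul_le _ _) (norm_nonneg _))
    _ ≤ _ := mul_le_mul
        ((mul_le_of_le_one_left (norm_nonneg _) (norm_neg_one_pow_le _)).trans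
          (norm_pow_le_pow_of_le hx hexp))
        (norm_tsum_pow_mul_prod_one_sub_pow_le hx k) (norm_nonneg _) (by positivity)

variable [CompleteSpace R]

theorem summable_neg_one_pow_mul_pow_pentagonal_sub (hx : ‖x‖ < 1) :
    Summable fun k : ℕ => (-1) ^ k * (x ^ pentagonal (-k) - x ^ pentagonal (k + 1)) := by
  refine Summable.of_norm_bounded
    ((summable_geometric_of_lt_one (norm_nonneg x) hx).mul_left 2) fun k => ?_
  have h₁ := natAbs_le_pentagonal (-k)
  have h₂ := natAbs_le_pentagonal (k + 1)
  calc ‖(-1) ^ k * (x ^ pentagonal (-k) - x ^ pentagonal (k + 1))‖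
      ≤ ‖(-1 : R) ^ k‖ * ‖x ^ pentagonal (-k) - x ^ pentagonal (k + 1)‖ := norm_mul_le _ _
    _ ≤ ‖x ^ pentagonal (-k)‖ + ‖x ^ pentagonal (k + 1)‖ :=
        (mul_le_of_le_one_left (norm_nonneg _) (norm_neg_one_pow_le k)).trans (norm_sub_le _ _)
    _ ≤ ‖x‖ ^ k + ‖x‖ ^ k := add_le_add (norm_pow_le_pow_of_le hx (by omega))
        (norm_pow_le_pow_of_le hx (by omega))
    _ = 2 * ‖x‖ ^ k := by ring

theorem multipliable_one_sub_pow_add (hx : ‖x‖ < 1) (k : ℕ) :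
    Multipliable fun n => 1 - x ^ (n + k + 1) := by
  simp only [sub_eq_add_neg]
  refine multipliable_one_add_of_summable
    ((summable_geometric_of_lt_one (norm_nonneg x) hx).of_nonneg_of_le (fun _ => norm_nonneg _)
      fun n => ?_)
  rw [norm_neg]
  exact norm_pow_le_pow_of_le hx (by omega)

theorem summable_pow_mul_prod_one_sub_pow (hx : ‖x‖ < 1) (k : ℕ) :
    Summable fun n => x ^ ((k + 1) * n) * ∏ i ∈ range (n + 1), (1 - x ^ (k + i + 1)) :=
  .of_norm_bounded ((summable_geometric_of_lt_one (norm_nonneg x) hx).mul_left _)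
    (norm_pow_mul_prod_one_sub_pow_le hx k)

theorem tprod_one_sub_pow_eq_tsum_pentagonal (hx : ‖x‖ < 1) :
    ∏' n, (1 - x ^ (n + 1)) =
      ∑' k : ℕ, (-1) ^ k * (x ^ pentagonal (-k) - x ^ pentagonal (k + 1)) :=
  Pentagonal.tprod_one_sub_pow (tendsto_pow_atTop_nhds_zero_of_norm_lt_one hx)
    (summable_pow_mul_prod_one_sub_pow hx) (multipliable_one_sub_pow_add hx)
    (summable_neg_one_pow_mul_pow_pentagonal_sub hx) (tendsto_pentagonal_remainder hx)

end NormedCommRing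

theorem HasSum.of_neg_of_add_one {M : Type*} [AddCommMonoid M] [TopologicalSpace M]
    [ContinuousAdd M] {f : ℤ → M} {a b : M} (h₁ : HasSum (fun k : ℕ => f (-k)) a)
    (h₂ : HasSum (fun k : ℕ => f (k + 1)) b) : HasSum f (a + b) :=
  (Equiv.neg ℤ).hasSum_iff.1 <|
    HasSum.of_nat_of_neg_add_one (f := f ∘ Neg.neg) h₁ (by simpa using h₂)

section NormedField

variable {𝕜 : Type*} [NormedField 𝕜] [CompleteSpace 𝕜] {x : 𝕜}

theorem summable_neg_one_zpow_mul_pow_pentagonal (hx : ‖x‖ < 1) :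
    Summable fun n : ℤ => (-1 : 𝕜) ^ n * x ^ pentagonal n := by
  have hgeom := summable_geometric_of_lt_one (norm_nonneg x) hx
  refine .of_norm_bounded (g := fun n : ℤ => ‖x‖ ^ n.natAbs)
    (.of_nat_of_neg (by simpa using hgeom) (by simpa using hgeom)) fun n => ?_
  rw [norm_mul, norm_zpow, norm_neg, norm_one, one_zpow, one_mul]
  exact norm_pow_le_pow_of_le hx (natAbs_le_pentagonal n)

theorem tsum_neg_one_zpow_mul_zpow_pentagonal (hx : ‖x‖ < 1) :
    ∑' n : ℤ, (-1 : 𝕜) ^ n * x ^ (n * (3 * n - 1) / 2) =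
      ∑' k : ℕ, (-1) ^ k * (x ^ pentagonal (-k) - x ^ pentagonal (k + 1)) := by
  have hsum := summable_neg_one_zpow_mul_pow_pentagonal hx
  have h₁ : Summable fun k : ℕ => (-1 : 𝕜) ^ (-k : ℤ) * x ^ pentagonal (-k) :=
    hsum.comp_injective (neg_injective.comp Nat.cast_injective)
  have h₂ : Summable fun k : ℕ => (-1 : 𝕜) ^ (k + 1 : ℤ) * x ^ pentagonal (k + 1) :=
    hsum.comp_injective ((add_left_injective 1).comp Nat.cast_injective)
  have hpent (n : ℤ) : x ^ (n * (3 * n - 1) / 2) = x ^ pentagonal n := by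
    rw [← natCast_pentagonal, zpow_natCast]
  simp only [hpent]
  rw [(HasSum.of_neg_of_add_one (f := fun n : ℤ => (-1 : 𝕜) ^ n * x ^ pentagonal n)
    h₁.hasSum h₂.hasSum).tsum_eq, ← h₁.tsum_add h₂]
  refine tsum_congr fun k => ?_
  rw [zpow_neg, zpow_add_one₀ (by norm_num), zpow_natCast, ← inv_pow, inv_neg_one]
  ring

end NormedField

theorem pentagonal_number_theorem (q : ℂ) (hq : ‖q‖ < 1) :
    E q = ∑' n : ℤ, (-1 : ℂ) ^ n * q ^ (n * (3 * n - 1) / 2) := by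
  rw [E, tprod_one_sub_pow_eq_tsum_pentagonal hq, tsum_neg_one_zpow_mul_zpow_pentagonal hq]
end

section
/- For |q|<1, the theta function φ(q) := ∑_{n∈ℤ} q^{n²} satisfies the product identity φ(q) = E(q²)^5 / (E(q⁴)² E(q)²). -/
open scoped BigOperators

/-!
Specialising the finite `q`-binomial theorem
`∏_{j<n} (1 + z Q^j) = ∑_k Q^(k choose 2) [n, k]_Q z^k` to `n = 2m`, `Q = q²`, `z = q^(1-2m)`
gives the finite Jacobi identity `(∏_{i<m} (1 + q^(2i+1)))² = ∑_{|k| ≤ m} [2m, m+k]_{q²} q^(k²)`.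
As `m → ∞` every Gaussian binomial `[2m, m+k]_{q²}` tends to `1 / E(q²)`, and all of them are
bounded by `1 / ∏ (1 - |q|^(2j+2))`, so Tannery's theorem gives Gauss's formula
`φ(q) = E(q²) ∏ (1 + q^(2n+1))²`. Splitting `E(x)` into its odd and even factors gives
`∏ (1 + x^(2n+1)) = E(x²)² / (E(x) E(x⁴))`, and substituting this proves the eta quotient.
-/

open Finset Filter Topology

section GaussBinom

variable {R : Type*}

/-- `n - k` truncates, which is harmless: `gaussBinom Q n k = 0` for `n < k`. -/
def gaussBinom [CommSemiring R] (Q : R) : ℕ → ℕ → R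
  | _, 0 => 1
  | 0, _ + 1 => 0
  | n + 1, k + 1 => gaussBinom Q n (k + 1) + Q ^ (n - k) * gaussBinom Q n k

/-- `qPochhammer Q k` is `(Q; Q)_k`. -/
def qPochhammer [CommRing R] (Q : R) (k : ℕ) : R := ∏ j ∈ range k, (1 - Q ^ (j + 1))

section CommSemiring

variable [CommSemiring R] (Q : R)

@[simp] lemma gaussBinom_zero_right (n : ℕ) : gaussBinom Q n 0 = 1 := by
  cases n <;> rfl

lemma gaussBinom_succ_succ (n k : ℕ) :
    gaussBinom Q (n + 1) (k + 1) = gaussBinom Q n (k + 1) + Q ^ (n - k) * gaussBinom Q n k :=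
  rfl

lemma gaussBinom_eq_zero_of_lt {n k : ℕ} (h : n < k) : gaussBinom Q n k = 0 := by
  induction n generalizing k with
  | zero => obtain ⟨k, rfl⟩ := Nat.exists_eq_add_of_lt h; rfl
  | succ n ih =>
    obtain ⟨k, rfl⟩ := Nat.exists_eq_add_of_le' (n.zero_lt_succ.trans h)
    rw [gaussBinom_succ_succ, ih (by omega), ih (by omega), mul_zero, add_zero]

@[simp] lemma gaussBinom_self (n : ℕ) : gaussBinom Q n n = 1 := by
  induction n with
  | zero => rfl
  | succ n ih => rw [gaussBinom_succ_succ, gaussBinom_eq_zero_of_lt Q n.lt_succ_self, ih]; simp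

/-- The finite `q`-binomial theorem. -/
theorem prod_one_add_mul_pow_eq_sum (z : R) (n : ℕ) :
    ∏ j ∈ range n, (1 + z * Q ^ j) =
      ∑ k ∈ range (n + 1), Q ^ k.choose 2 * gaussBinom Q n k * z ^ k := by
  induction n with
  | zero => simp
  | succ n ih =>
    set T : ℕ → R := fun k ↦ Q ^ k.choose 2 * gaussBinom Q n k * z ^ k
    have h_shift :
        ∑ k ∈ range (n + 1), Q ^ (k + 1).choose 2 * gaussBinom Q n (k + 1) * z ^ (k + 1) + 1 =
          ∑ k ∈ range (n + 1), T k := by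
      rw [sum_range_succ, gaussBinom_eq_zero_of_lt Q n.lt_succ_self, sum_range_succ' T]
      simp [T]
    have h_mul : ∀ k ∈ range (n + 1), Q ^ (k + 1).choose 2 * (Q ^ (n - k) * gaussBinom Q n k) *
        z ^ (k + 1) = T k * (z * Q ^ n) := by
      intro k hk
      have : (k + 1).choose 2 + (n - k) = k.choose 2 + n := by
        have hc : (k + 1).choose 2 = k.choose 2 + k := by
          rw [Nat.choose_succ_succ', Nat.choose_one_right, add_comm]
        have := mem_range.1 hk
        omega
      calc Q ^ (k + 1).choose 2 * (Q ^ (n - k) * gaussBinom Q n k) * z ^ (k + 1)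
          = Q ^ ((k + 1).choose 2 + (n - k)) * gaussBinom Q n k * z ^ (k + 1) := by ring
        _ = T k * (z * Q ^ n) := by rw [this]; ring
    rw [prod_range_succ, ih, sum_range_succ' _ (n + 1)]
    simp only [gaussBinom_succ_succ, mul_add, add_mul, sum_add_distrib, sum_congr rfl h_mul,
      ← sum_mul]
    rw [← h_shift]
    simp only [mul_one, Nat.choose_zero_succ, pow_zero, gaussBinom_zero_right]
    ring

end CommSemiring

section CommRing

variable [CommRing R] (Q : R)

@[simp] lemma qPochhammer_zero : qPochhammer Q 0 = 1 := prod_range_zero _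

lemma qPochhammer_succ (k : ℕ) : qPochhammer Q (k + 1) = qPochhammer Q k * (1 - Q ^ (k + 1)) :=
  prod_range_succ _ _

theorem gaussBinom_mul_qPochhammer_mul_qPochhammer (k l : ℕ) :
    gaussBinom Q (k + l) k * qPochhammer Q k * qPochhammer Q l = qPochhammer Q (k + l) := by
  induction k generalizing l with
  | zero => simp
  | succ k ihk =>
    induction l with
    | zero => simp
    | succ l ihl =>
      have hk := ihk (l + 1)
      rw [show k + (l + 1) = k + 1 + l by ring] at hk
      rw [show k + 1 + (l + 1) = k + 1 + l + 1 by ring, gaussBinom_succ_succ,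
        show k + 1 + l - k = l + 1 by omega]
      simp only [qPochhammer_succ] at *
      linear_combination (1 - Q ^ (l + 1)) * ihl + Q ^ (l + 1) * (1 - Q ^ (k + 1)) * hk

end CommRing

end GaussBinom

section Norm

variable {R : Type*}

lemma norm_gaussBinom_le [SeminormedCommRing R] [NormOneClass R] (Q : R) (n k : ℕ) :
    ‖gaussBinom Q n k‖ ≤ gaussBinom ‖Q‖ n k := by
  induction n generalizing k with
  | zero => cases k <;> simp [gaussBinom]
  | succ n ih =>
    cases k with
    | zero => simp
    | succ k =>
      rw [gaussBinom_succ_succ, gaussBinom_succ_succ]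
      calc ‖gaussBinom Q n (k + 1) + Q ^ (n - k) * gaussBinom Q n k‖
          ≤ ‖gaussBinom Q n (k + 1)‖ + ‖Q ^ (n - k)‖ * ‖gaussBinom Q n k‖ :=
            (norm_add_le _ _).trans (by gcongr; exact norm_mul_le _ _)
        _ ≤ _ := by gcongr <;> first | exact ih _ | exact norm_pow_le _ _

lemma summable_norm_pow_comp [SeminormedRing R] [NormOneClass R] {x : R} (hx : ‖x‖ < 1)
    {g : ℕ → ℕ} (hg : ∀ n, n ≤ g n) : Summable fun n ↦ ‖x ^ g n‖ :=
  (summable_geometric_of_lt_one (norm_nonneg x) hx).of_nonneg_of_le (fun _ ↦ norm_nonneg _)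
    fun n ↦ (norm_pow_le _ _).trans (pow_le_pow_of_le_one (norm_nonneg x) hx.le (hg n))

lemma norm_pow_lt_one [SeminormedRing R] [NormOneClass R] {x : R} (hx : ‖x‖ < 1) {n : ℕ}
    (hn : n ≠ 0) : ‖x ^ n‖ < 1 :=
  (norm_pow_le _ _).trans_lt (pow_lt_one₀ (norm_nonneg x) hx hn)

lemma one_sub_pow_succ_ne_zero [SeminormedRing R] [NormOneClass R] {x : R} (hx : ‖x‖ < 1)
    (n : ℕ) : 1 - x ^ (n + 1) ≠ 0 := by
  have h_lt := norm_pow_lt_one hx n.succ_ne_zero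
  rw [sub_ne_zero]
  rintro h
  rw [← h, norm_one] at h_lt
  exact h_lt.false

variable [NormedCommRing R] [NormOneClass R] [CompleteSpace R] {x : R}

lemma multipliable_one_add_pow_comp (hx : ‖x‖ < 1) {g : ℕ → ℕ} (hg : ∀ n, n ≤ g n) :
    Multipliable fun n ↦ 1 + x ^ g n :=
  multipliable_one_add_of_summable (summable_norm_pow_comp hx hg)

lemma multipliable_one_sub_pow_comp (hx : ‖x‖ < 1) {g : ℕ → ℕ} (hg : ∀ n, n ≤ g n) :
    Multipliable fun n ↦ 1 - x ^ g n := by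
  simpa [sub_eq_add_neg] using
    multipliable_one_add_of_summable (f := fun n ↦ -x ^ g n)
      (by simpa using summable_norm_pow_comp hx hg)

lemma tendsto_qPochhammer (hx : ‖x‖ < 1) :
    Tendsto (qPochhammer x) atTop (𝓝 (∏' n, (1 - x ^ (n + 1)))) :=
  (multipliable_one_sub_pow_comp hx fun n ↦ n.le_succ).hasProd.tendsto_prod_nat

lemma tprod_one_sub_pow_succ_ne_zero [NormMulClass R] (hx : ‖x‖ < 1) :
    ∏' n, (1 - x ^ (n + 1)) ≠ 0 := by
  simp_rw [sub_eq_add_neg]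
  exact tprod_one_add_ne_zero_of_summable
    (fun n ↦ by simpa [sub_eq_add_neg] using one_sub_pow_succ_ne_zero hx n)
    (by simpa using summable_norm_pow_comp hx fun n ↦ n.le_succ)

end Norm

section Real

variable {r : ℝ}

lemma qPochhammer_pos (h0 : 0 ≤ r) (h1 : r < 1) (k : ℕ) : 0 < qPochhammer r k :=
  prod_pos fun j _ ↦ sub_pos.2 (pow_lt_one₀ h0 h1 j.succ_ne_zero)

lemma antitone_qPochhammer (h0 : 0 ≤ r) (h1 : r < 1) : Antitone (qPochhammer r) :=
  antitone_nat_of_succ_le fun k ↦ by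
    rw [qPochhammer_succ]
    exact mul_le_of_le_one_right (qPochhammer_pos h0 h1 k).le (sub_le_self _ (pow_nonneg h0 _))

lemma gaussBinom_mul_qPochhammer_le_one (h0 : 0 ≤ r) (h1 : r < 1) (n k : ℕ) :
    gaussBinom r n k * qPochhammer r k ≤ 1 := by
  rcases lt_or_ge n k with h | h
  · simp [gaussBinom_eq_zero_of_lt _ h]
  · obtain ⟨l, rfl⟩ := Nat.exists_eq_add_of_le h
    rw [← mul_le_iff_le_one_left (qPochhammer_pos h0 h1 l),
      gaussBinom_mul_qPochhammer_mul_qPochhammer, add_comm]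
    exact antitone_qPochhammer h0 h1 (Nat.le_add_right l k)

lemma tprod_le_qPochhammer (h0 : 0 ≤ r) (h1 : r < 1) (k : ℕ) :
    ∏' n, (1 - r ^ (n + 1)) ≤ qPochhammer r k :=
  (antitone_qPochhammer h0 h1).le_of_tendsto
    (tendsto_qPochhammer (by rwa [Real.norm_of_nonneg h0])) k

lemma tprod_one_sub_pow_succ_pos (h0 : 0 ≤ r) (h1 : r < 1) :
    0 < ∏' n, (1 - r ^ (n + 1)) := by
  have hr : ‖r‖ < 1 := by rwa [Real.norm_of_nonneg h0]
  exact (ge_of_tendsto' (tendsto_qPochhammer hr) fun k ↦ (qPochhammer_pos h0 h1 k).le).lt_of_ne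
    (tprod_one_sub_pow_succ_ne_zero hr).symm

end Real

theorem norm_gaussBinom_le_inv_tprod {R : Type*} [SeminormedCommRing R] [NormOneClass R] {Q : R}
    (hQ : ‖Q‖ < 1) (n k : ℕ) : ‖gaussBinom Q n k‖ ≤ (∏' j, (1 - ‖Q‖ ^ (j + 1)))⁻¹ := by
  have h0 := norm_nonneg Q
  calc ‖gaussBinom Q n k‖ ≤ gaussBinom ‖Q‖ n k := norm_gaussBinom_le Q n k
    _ ≤ (qPochhammer ‖Q‖ k)⁻¹ := by
      rw [← one_div, le_div_iff₀ (qPochhammer_pos h0 hQ k)]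
      exact gaussBinom_mul_qPochhammer_le_one h0 hQ n k
    _ ≤ _ := inv_anti₀ (tprod_one_sub_pow_succ_pos h0 hQ) (tprod_le_qPochhammer h0 hQ k)

section Complex

variable {q : ℂ}

lemma E_ne_zero (hq : ‖q‖ < 1) : E q ≠ 0 := tprod_one_sub_pow_succ_ne_zero hq

lemma prod_range_two_mul_one_add_zpow (hq : q ≠ 0) (m : ℕ) :
    ∏ j ∈ range (2 * m), (1 + q ^ (2 * (j : ℤ) + 1 - 2 * m)) =
      q ^ (-(m : ℤ) ^ 2) * (∏ i ∈ range m, (1 + q ^ (2 * i + 1))) ^ 2 := by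
  induction m with
  | zero => simp
  | succ m ih =>
    -- the new outer factors pair up: `1 + q^(-(2m+1)) = q^(-(2m+1)) * (1 + q^(2m+1))`
    have h_mid : ∀ j ∈ range (2 * m), 1 + q ^ (2 * ((j + 1 : ℕ) : ℤ) + 1 - 2 * ((m + 1 : ℕ) : ℤ)) =
        1 + q ^ (2 * (j : ℤ) + 1 - 2 * m) := fun j _ ↦ by push_cast; ring_nf
    rw [show 2 * (m + 1) = 2 * m + 1 + 1 by ring, prod_range_succ', prod_range_succ,
      prod_congr rfl h_mid, ih, prod_range_succ]
    have h_last :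
        2 * ((2 * m + 1 : ℕ) : ℤ) + 1 - 2 * ((m + 1 : ℕ) : ℤ) = ((2 * m + 1 : ℕ) : ℤ) := by
      push_cast; ring
    have h_first : 2 * ((0 : ℕ) : ℤ) + 1 - 2 * ((m + 1 : ℕ) : ℤ) = -((2 * m + 1 : ℕ) : ℤ) := by
      push_cast; ring
    have h_sq : -((m + 1 : ℕ) : ℤ) ^ 2 = -(m : ℤ) ^ 2 + -((2 * m + 1 : ℕ) : ℤ) := by
      push_cast; ring
    rw [h_last, h_first, h_sq, zpow_add₀ hq, zpow_neg q ((2 * m + 1 : ℕ) : ℤ), zpow_natCast]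
    field_simp
    ring

lemma two_mul_cast_choose_two (k : ℕ) : 2 * (k.choose 2 : ℤ) = k * (k - 1) := by
  have h : ((2 * k.choose 2 : ℕ) : ℚ) = ((k * (k - 1) : ℤ) : ℚ) := by
    push_cast [Nat.cast_choose_two]; ring
  exact_mod_cast h

/-- The finite Jacobi triple product identity at `z = 1`. -/
theorem sq_prod_one_add_pow_odd (hq : q ≠ 0) (m : ℕ) :
    (∏ i ∈ range m, (1 + q ^ (2 * i + 1))) ^ 2 =
      ∑ k ∈ range (2 * m + 1), gaussBinom (q ^ 2) (2 * m) k * q ^ (((k : ℤ) - m) ^ 2) := by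
  have h := prod_one_add_mul_pow_eq_sum (q ^ 2) (q ^ (1 - 2 * m : ℤ)) (2 * m)
  have h_prod : ∀ j ∈ range (2 * m),
      1 + q ^ (1 - 2 * m : ℤ) * (q ^ 2) ^ j = 1 + q ^ (2 * (j : ℤ) + 1 - 2 * m) := fun j _ ↦ by
    rw [← pow_mul, ← zpow_natCast, ← zpow_add₀ hq]; push_cast; ring_nf
  have h_sum : ∀ k ∈ range (2 * m + 1),
      (q ^ 2) ^ k.choose 2 * gaussBinom (q ^ 2) (2 * m) k * (q ^ (1 - 2 * m : ℤ)) ^ k =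
        q ^ (-(m : ℤ) ^ 2) * (gaussBinom (q ^ 2) (2 * m) k * q ^ (((k : ℤ) - m) ^ 2)) := by
    intro k _
    have h_choose : (q ^ 2) ^ k.choose 2 = q ^ (2 * (k.choose 2 : ℤ)) := by
      rw [← pow_mul, ← zpow_natCast]; push_cast; rfl
    have h_exp : 2 * (k.choose 2 : ℤ) + (1 - 2 * m) * k = -(m : ℤ) ^ 2 + ((k : ℤ) - m) ^ 2 := by
      linear_combination two_mul_cast_choose_two k
    rw [h_choose, ← zpow_natCast (q ^ (1 - 2 * m : ℤ)) k, ← zpow_mul, mul_right_comm,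
      ← zpow_add₀ hq, h_exp, zpow_add₀ hq]
    ring
  rw [prod_congr rfl h_prod, prod_range_two_mul_one_add_zpow hq, sum_congr rfl h_sum,
    ← mul_sum] at h
  exact mul_left_cancel₀ (zpow_ne_zero _ hq) h

lemma tendsto_gaussBinom_add {α : Type*} {l : Filter α} (hq : ‖q‖ < 1) {a b : α → ℕ}
    (ha : Tendsto a l atTop) (hb : Tendsto b l atTop) :
    Tendsto (fun i ↦ gaussBinom q (a i + b i) (a i)) l (𝓝 (E q)⁻¹) := by
  have hE := E_ne_zero hq
  have h_ne (k : ℕ) : qPochhammer q k ≠ 0 :=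
    prod_ne_zero_iff.2 fun j _ ↦ one_sub_pow_succ_ne_zero hq j
  have h_div : ∀ i, gaussBinom q (a i + b i) (a i) =
      qPochhammer q (a i + b i) / (qPochhammer q (a i) * qPochhammer q (b i)) := fun i ↦ by
    rw [eq_div_iff (mul_ne_zero (h_ne _) (h_ne _)), ← mul_assoc,
      gaussBinom_mul_qPochhammer_mul_qPochhammer]
  have h_lim := tendsto_qPochhammer hq
  simp_rw [h_div, show (E q)⁻¹ = E q / (E q * E q) by field_simp]
  exact (h_lim.comp (ha.atTop_add_atTop hb)).div ((h_lim.comp ha).mul (h_lim.comp hb))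
    (mul_ne_zero hE hE)

lemma norm_zpow_sq_le (hq : ‖q‖ ≤ 1) (k : ℤ) : ‖q ^ (k ^ 2)‖ ≤ ‖q‖ ^ k.natAbs := by
  rw [← Int.natAbs_sq, ← Int.natCast_pow, zpow_natCast, norm_pow]
  exact pow_le_pow_of_le_one (norm_nonneg q) hq (Nat.le_self_pow two_ne_zero _)

lemma summable_pow_natAbs {r : ℝ} (h0 : 0 ≤ r) (h1 : r < 1) :
    Summable fun k : ℤ ↦ r ^ k.natAbs :=
  .of_nat_of_neg (by simpa using summable_geometric_of_lt_one h0 h1)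
    (by simpa using summable_geometric_of_lt_one h0 h1)

noncomputable def finiteJacobiTerm (q : ℂ) (m : ℕ) (k : ℤ) : ℂ :=
  if |k| ≤ m then gaussBinom (q ^ 2) (2 * m) (m + k).toNat * q ^ (k ^ 2) else 0

lemma tsum_finiteJacobiTerm (hq : q ≠ 0) (m : ℕ) :
    ∑' k, finiteJacobiTerm q m k = (∏ i ∈ range m, (1 + q ^ (2 * i + 1))) ^ 2 := by
  rw [sq_prod_one_add_pow_odd hq, tsum_eq_sum (f := finiteJacobiTerm q m) (s := Icc (-(m : ℤ)) m)
    fun k hk ↦ if_neg (by rwa [mem_Icc, ← abs_le] at hk)]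
  refine sum_nbij' (fun k ↦ (m + k).toNat) (fun k ↦ (k : ℤ) - m) ?_ ?_ ?_ ?_ ?_ <;>
    intro k hk <;> simp only [mem_Icc, mem_range] at hk
  · rw [mem_range]; omega
  · rw [mem_Icc]; omega
  · omega
  · omega
  · rw [finiteJacobiTerm, if_pos (abs_le.2 hk)]
    congr 3
    omega

lemma tendsto_finiteJacobiTerm (hq : ‖q‖ < 1) (k : ℤ) :
    Tendsto (finiteJacobiTerm q · k) atTop (𝓝 (q ^ (k ^ 2) / E (q ^ 2))) := by
  have hq2 := norm_pow_lt_one hq two_ne_zero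
  have h_toNat : ∀ c : ℤ, Tendsto (fun m : ℕ ↦ (m + c).toNat) atTop atTop := fun c ↦
    tendsto_atTop_atTop.2 fun b ↦ ⟨b + c.natAbs, fun m hm ↦ by omega⟩
  have h_eq : ∀ᶠ m : ℕ in atTop, gaussBinom (q ^ 2) ((m + k).toNat + (m + -k).toNat) (m + k).toNat *
      q ^ (k ^ 2) = finiteJacobiTerm q m k := by
    filter_upwards [eventually_ge_atTop k.natAbs] with m hm
    rw [finiteJacobiTerm, if_pos (abs_le.2 ⟨by omega, by omega⟩),
      show (m + k).toNat + (m + -k).toNat = 2 * m by omega]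
  rw [div_eq_inv_mul]
  exact ((tendsto_gaussBinom_add hq2 (h_toNat k) (h_toNat (-k))).mul_const _).congr' h_eq

lemma norm_finiteJacobiTerm_le (hq : ‖q‖ < 1) (m : ℕ) (k : ℤ) :
    ‖finiteJacobiTerm q m k‖ ≤ (∏' j, (1 - ‖q ^ 2‖ ^ (j + 1)))⁻¹ * ‖q‖ ^ k.natAbs := by
  have hq2 := norm_pow_lt_one hq two_ne_zero
  rw [finiteJacobiTerm]
  split_ifs
  · rw [norm_mul]
    exact mul_le_mul (norm_gaussBinom_le_inv_tprod hq2 _ _) (norm_zpow_sq_le hq.le k)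
      (norm_nonneg _) (inv_nonneg.2 (tprod_one_sub_pow_succ_pos (norm_nonneg _) hq2).le)
  · rw [norm_zero]
    exact mul_nonneg (inv_nonneg.2 (tprod_one_sub_pow_succ_pos (norm_nonneg _) hq2).le)
      (pow_nonneg (norm_nonneg q) _)

end Complex

/-- Gauss's product formula for `φ`, the Jacobi triple product at `z = 1`. -/
theorem phi_eq_E_mul_sq_tprod {q : ℂ} (hq : ‖q‖ < 1) :
    phi q = E (q ^ 2) * (∏' n : ℕ, (1 + q ^ (2 * n + 1))) ^ 2 := by
  rcases eq_or_ne q 0 with rfl | hq0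
  · simpa [phi, E] using tsum_eq_single (f := fun n : ℤ ↦ (0 : ℂ) ^ (n ^ 2)) 0
      fun n hn ↦ zero_zpow _ (pow_ne_zero 2 hn)
  have hE := E_ne_zero (norm_pow_lt_one hq two_ne_zero)
  have h_tannery := tendsto_tsum_of_dominated_convergence
    ((summable_pow_natAbs (norm_nonneg q) hq).mul_left _) (tendsto_finiteJacobiTerm hq)
    (Eventually.of_forall (norm_finiteJacobiTerm_le hq))
  simp_rw [tsum_finiteJacobiTerm hq0, tsum_div_const] at h_tannery
  have h_prod := ((multipliable_one_add_pow_comp hq (g := (2 * · + 1)) fun n ↦ by omega)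
    |>.hasProd.tendsto_prod_nat).pow 2
  rw [mul_comm, ← div_eq_iff hE]
  exact tendsto_nhds_unique h_tannery h_prod

section EulerProduct

variable {x : ℂ}

lemma E_eq_tprod_one_sub_pow_odd_mul (hx : ‖x‖ < 1) :
    E x = (∏' n : ℕ, (1 - x ^ (2 * n + 1))) * E (x ^ 2) := by
  have h_odd (k : ℕ) : 1 - x ^ (2 * k + 1 + 1) = 1 - (x ^ 2) ^ (k + 1) := by
    rw [← pow_mul]; ring_nf
  rw [E, E, ← tprod_even_mul_odd (f := fun n ↦ 1 - x ^ (n + 1))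
    (multipliable_one_sub_pow_comp hx fun n ↦ by omega)
    (by simpa only [h_odd] using
      multipliable_one_sub_pow_comp (norm_pow_lt_one hx two_ne_zero) fun n ↦ n.le_succ)]
  simp_rw [h_odd]

lemma tprod_one_sub_pow_odd_mul_tprod_one_add_pow_odd (hx : ‖x‖ < 1) :
    (∏' n : ℕ, (1 - x ^ (2 * n + 1))) * ∏' n : ℕ, (1 + x ^ (2 * n + 1)) =
      ∏' n : ℕ, (1 - (x ^ 2) ^ (2 * n + 1)) := by
  rw [← (multipliable_one_sub_pow_comp hx (g := (2 * · + 1)) fun n ↦ by omega).tprod_mul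
    (multipliable_one_add_pow_comp hx (g := (2 * · + 1)) fun n ↦ by omega)]
  exact tprod_congr fun n ↦ by ring

theorem tprod_one_add_pow_odd_eq (hx : ‖x‖ < 1) :
    ∏' n : ℕ, (1 + x ^ (2 * n + 1)) = E (x ^ 2) ^ 2 / (E x * E (x ^ 4)) := by
  have h_one := E_eq_tprod_one_sub_pow_odd_mul hx
  have h_two := E_eq_tprod_one_sub_pow_odd_mul (norm_pow_lt_one hx two_ne_zero)
  have h_mul := tprod_one_sub_pow_odd_mul_tprod_one_add_pow_odd hx
  rw [← pow_mul] at h_two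
  rw [eq_div_iff (mul_ne_zero (E_ne_zero hx) (E_ne_zero (norm_pow_lt_one hx four_ne_zero)))]
  linear_combination (∏' n : ℕ, (1 + x ^ (2 * n + 1))) * E (x ^ 4) * h_one +
    E (x ^ 2) * E (x ^ 4) * h_mul - E (x ^ 2) * h_two

end EulerProduct

theorem phi_eta_quotient (q : ℂ) (hq : ‖q‖ < 1) :
    phi q = E (q ^ 2) ^ 5 / (E (q ^ 4) ^ 2 * E q ^ 2) := by
  have hE₁ := E_ne_zero hq
  have hE₄ := E_ne_zero (norm_pow_lt_one hq four_ne_zero)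
  rw [phi_eq_E_mul_sq_tprod hq, tprod_one_add_pow_odd_eq hq]
  field_simp
end

section
/- For |q|<1, ψ(q) = f(q³,q⁶) + q·ψ(q⁹), where ψ(q) = ∑_{n∈ℤ} q^{2n²-n} and f(a,b) = ∑_{n∈ℤ} a^{n(n+1)/2} b^{n(n-1)/2}. -/
open scoped BigOperators

/-! The exponent `2n² - n` of `ψ` satisfies `8(2n² - n) + 1 = (4n - 1)²`, so
`ψ(q) = ∑ q^((N² - 1)/8)` over the odd `N = 4n - 1`. The `N` divisible by `3`, i.e. `n = 1 - 3m`,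
give `(N² - 1)/8 = 9(2m² - m) + 1`, hence `q ψ(q⁹)`. The remaining `N = ±(6k - 1)` give
`(N² - 1)/8 = 3·k(k+1)/2 + 6·k(k-1)/2`, the exponent of the `k`-th term of `f(q³, q⁶)`; the sign
is `+` for even `k` and `-` for odd `k`, which is `ramafIndex`. -/

lemma zpow_add_of_nonneg₀ {G₀ : Type*} [GroupWithZero G₀] (a : G₀) {m n : ℤ} (hm : 0 ≤ m)
    (hn : 0 ≤ n) : a ^ (m + n) = a ^ m * a ^ n :=
  zpow_add' (.inr (by omega))

lemma summable_zpow_of_natAbs_le {𝕜 : Type*} [NormedDivisionRing 𝕜] [CompleteSpace 𝕜] {q : 𝕜}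
    (hq : ‖q‖ < 1) {e : ℤ → ℤ} (he : ∀ n, (n.natAbs : ℤ) ≤ e n) :
    Summable fun n ↦ q ^ e n := by
  refine .of_norm_bounded (g := fun n : ℤ ↦ ‖q‖ ^ n.natAbs) ?_ fun n ↦ ?_
  · apply Summable.of_nat_of_neg <;>
      simpa using summable_geometric_of_lt_one (norm_nonneg q) hq
  · have hn := he n
    obtain ⟨k, hk⟩ := Int.eq_ofNat_of_zero_le (show 0 ≤ e n by omega)
    rw [hk, zpow_natCast, norm_pow]
    exact pow_le_pow_of_le_one (norm_nonneg q) hq.le (by omega)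

lemma natAbs_le_two_mul_sq_sub_self (n : ℤ) : (n.natAbs : ℤ) ≤ 2 * n ^ 2 - n := by
  linarith [Int.natAbs_le_self_sq n, Int.le_self_sq n]

def ramafIndex (k : ℤ) : ℤ := if k % 2 = 0 then 3 * (k / 2) else (1 - 3 * k) / 2

lemma two_mul_psi_exponent_ramafIndex (k : ℤ) :
    2 * (2 * ramafIndex k ^ 2 - ramafIndex k) = 9 * k ^ 2 - 3 * k := by
  rcases Int.even_or_odd' k with ⟨j, rfl | rfl⟩
  · have : ramafIndex (2 * j) = 3 * j := by simp only [ramafIndex]; split_ifs <;> omega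
    rw [this]; ring
  · have : ramafIndex (2 * j + 1) = -3 * j - 1 := by simp only [ramafIndex]; split_ifs <;> omega
    rw [this]; ring

def psiDissectionEquiv : ℤ ⊕ ℤ ≃ ℤ where
  toFun := Sum.elim ramafIndex fun m ↦ 1 - 3 * m
  invFun n :=
    if n % 3 = 1 then .inr ((1 - n) / 3)
    else .inl (if n % 3 = 0 then 2 * (n / 3) else (1 - 2 * n) / 3)
  left_inv := by
    rintro (k | m) <;> dsimp only [Sum.elim_inl, Sum.elim_inr]
    · have hk : ramafIndex k % 3 ≠ 1 := by unfold ramafIndex; split_ifs <;> omega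
      rw [if_neg hk, Sum.inl.injEq]
      unfold ramafIndex
      split_ifs <;> omega
    · rw [if_pos (by omega), Sum.inr.injEq]
      omega
  right_inv n := by
    dsimp only
    split_ifs <;> simp only [Sum.elim_inl, Sum.elim_inr, ramafIndex] <;> (try split_ifs) <;> omega

lemma ramaf_term_eq_psi_term (q : ℂ) (k : ℤ) :
    (q ^ 3) ^ (k * (k + 1) / 2) * (q ^ 6) ^ (k * (k - 1) / 2) =
      q ^ (2 * ramafIndex k ^ 2 - ramafIndex k) := by
  have hA : 2 * (k * (k + 1) / 2) = k * (k + 1) :=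
    Int.mul_ediv_cancel' (Int.even_mul_succ_self k).two_dvd
  have hB : 2 * (k * (k - 1) / 2) = k * (k - 1) := by
    simpa [mul_comm] using Int.mul_ediv_cancel' (Int.even_mul_succ_self (k - 1)).two_dvd
  have hk : 0 ≤ k * (k + 1) ∧ 0 ≤ k * (k - 1) := by
    constructor <;> nlinarith [Int.le_self_sq k, Int.le_self_sq (-k)]
  have hexp := two_mul_psi_exponent_ramafIndex k
  rw [← zpow_natCast, ← zpow_natCast, ← zpow_mul, ← zpow_mul, Nat.cast_ofNat, Nat.cast_ofNat,
    ← zpow_add_of_nonneg₀ q (by linarith) (by linarith)]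
  congr 1
  linarith

lemma psi_term_one_sub_three_mul (q : ℂ) (m : ℤ) :
    q ^ (2 * (1 - 3 * m) ^ 2 - (1 - 3 * m)) = q * (q ^ 9) ^ (2 * m ^ 2 - m) := by
  have hm : 0 ≤ 9 * (2 * m ^ 2 - m) := by nlinarith [Int.le_self_sq m]
  have hmul := zpow_add_of_nonneg₀ q zero_le_one hm
  rw [zpow_one] at hmul
  rw [← zpow_natCast, ← zpow_mul, Nat.cast_ofNat, ← hmul]
  ring_nf

theorem psi_three_dissection (q : ℂ) (hq : ‖q‖ < 1) :
    psi q = ramaf (q ^ 3) (q ^ 6) + q * psi (q ^ 9) := by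
  have hsum := psiDissectionEquiv.summable_iff.mpr
    (summable_zpow_of_natAbs_le hq natAbs_le_two_mul_sq_sub_self)
  calc psi q = ∑' c, q ^ (2 * psiDissectionEquiv c ^ 2 - psiDissectionEquiv c) :=
        (psiDissectionEquiv.tsum_eq _).symm
    _ = ∑' k, q ^ (2 * ramafIndex k ^ 2 - ramafIndex k) +
          ∑' m : ℤ, q ^ (2 * (1 - 3 * m) ^ 2 - (1 - 3 * m)) :=
        Summable.tsum_sum (hsum.comp_injective Sum.inl_injective)
          (hsum.comp_injective Sum.inr_injective)
    _ = ramaf (q ^ 3) (q ^ 6) + q * psi (q ^ 9) := by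
        simp only [ramaf, ramaf_term_eq_psi_term, psi, psi_term_one_sub_three_mul,
          tsum_mul_left]
end

section
/- Let m, s be positive integers with 8s − m > 0 and |q|<1. Then (1/2)·(∑_{x,y∈ℤ} q^{8mx²+2mxy+sy²} − ∑_{x,y∈ℤ} q^{8mx²+6mxy+(s+m)y²}) = q^s · ψ(−q^{8s−m}) · ψ(−q^m), where ψ(q) = ∑_{n∈ℤ} q^{2n²−n}. -/
open scoped BigOperators

/-! ### Auxiliary lemmas -/

section Aux

/-- Splitting a sum over a sum type. -/
lemma hasSum_sumtype {α β : Type*} {f : α ⊕ β → ℂ} {A B : ℂ}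
    (hA : HasSum (fun a => f (Sum.inl a)) A) (hB : HasSum (fun b => f (Sum.inr b)) B) :
    HasSum f (A + B) := by
  have h1 : HasSum (f ∘ ((↑) : Set.range (Sum.inl : α → α ⊕ β) → α ⊕ β)) A :=
    (Sum.inl_injective.hasSum_range_iff).2 hA
  have h2 : HasSum (f ∘ ((↑) : Set.range (Sum.inr : β → α ⊕ β) → α ⊕ β)) B :=
    (Sum.inr_injective.hasSum_range_iff).2 hB
  exact h1.add_isCompl Set.isCompl_range_inl_range_inr h2

lemma tsum_split (f : ℤ × ℤ → ℂ) (hf : Summable f) (e : (ℤ × ℤ) ⊕ (ℤ × ℤ) ≃ ℤ × ℤ) :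
    ∑' p, f p = (∑' p, f (e (Sum.inl p))) + ∑' p, f (e (Sum.inr p)) := by
  rw [← Equiv.tsum_eq e f]
  have hfe : Summable (fun x => f (e x)) := hf.comp_injective e.injective
  have h1 : Summable (fun p : ℤ × ℤ => f (e (Sum.inl p))) :=
    hfe.comp_injective Sum.inl_injective
  have h2 : Summable (fun p : ℤ × ℤ => f (e (Sum.inr p))) :=
    hfe.comp_injective Sum.inr_injective
  exact (hasSum_sumtype (f := fun x => f (e x)) h1.hasSum h2.hasSum).tsum_eq

/-- Parity splitting of the second coordinate. -/
noncomputable def eqvSplit : (ℤ × ℤ) ⊕ (ℤ × ℤ) ≃ ℤ × ℤ :=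
  Equiv.ofBijective
    (Sum.elim (fun p : ℤ × ℤ => (p.1, 2 * p.2)) (fun p : ℤ × ℤ => (p.1, 2 * p.2 + 1)))
    (by
      constructor
      · rintro (⟨a, b⟩ | ⟨a, b⟩) (⟨c, d⟩ | ⟨c, d⟩) h <;>
          simp only [Sum.elim_inl, Sum.elim_inr, Prod.mk.injEq] at h <;>
          first
            | (exfalso; omega)
            | (simp only [Sum.inl.injEq, Sum.inr.injEq, Prod.mk.injEq, true_and, and_true]
               first | trivial | omega)
      · rintro ⟨a, b⟩
        rcases Int.even_or_odd b with ⟨k, hk⟩ | ⟨k, hk⟩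
        · exact ⟨Sum.inl (a, k), by simp only [Sum.elim_inl]; simp only [Prod.mk.injEq, true_and, and_true]; first | trivial | omega⟩
        · exact ⟨Sum.inr (a, k), by simp only [Sum.elim_inr]; simp only [Prod.mk.injEq, true_and, and_true]; first | trivial | omega⟩)

/-- Parity splitting by the difference of coordinates. -/
noncomputable def eqvPar : (ℤ × ℤ) ⊕ (ℤ × ℤ) ≃ ℤ × ℤ :=
  Equiv.ofBijective
    (Sum.elim (fun p : ℤ × ℤ => (p.1, p.1 + 2 * p.2))
      (fun p : ℤ × ℤ => (p.1, p.1 + 2 * p.2 + 1)))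
    (by
      constructor
      · rintro (⟨a, b⟩ | ⟨a, b⟩) (⟨c, d⟩ | ⟨c, d⟩) h <;>
          simp only [Sum.elim_inl, Sum.elim_inr, Prod.mk.injEq] at h <;>
          first
            | (exfalso; omega)
            | (simp only [Sum.inl.injEq, Sum.inr.injEq, Prod.mk.injEq, true_and, and_true]
               first | trivial | omega)
      · rintro ⟨a, b⟩
        rcases Int.even_or_odd (b - a) with ⟨k, hk⟩ | ⟨k, hk⟩
        · exact ⟨Sum.inl (a, k), by simp only [Sum.elim_inl]; simp only [Prod.mk.injEq, true_and, and_true]; first | trivial | omega⟩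
        · exact ⟨Sum.inr (a, k), by simp only [Sum.elim_inr]; simp only [Prod.mk.injEq, true_and, and_true]; first | trivial | omega⟩)

def eqv1 : ℤ × ℤ ≃ ℤ × ℤ :=
  ⟨fun p => (p.1 + p.2, -p.2), fun p => (p.1 + p.2, -p.2),
    fun p => by obtain ⟨a, b⟩ := p; simp only [Prod.mk.injEq, true_and, and_true]; first | trivial | omega,
    fun p => by obtain ⟨a, b⟩ := p; simp only [Prod.mk.injEq, true_and, and_true]; first | trivial | omega⟩

def eqv2 : ℤ × ℤ ≃ ℤ × ℤ :=
  ⟨fun p => (-p.2, -p.1), fun p => (-p.2, -p.1),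
    fun p => by obtain ⟨a, b⟩ := p; simp only [Prod.mk.injEq, true_and, and_true]; first | trivial | omega,
    fun p => by obtain ⟨a, b⟩ := p; simp only [Prod.mk.injEq, true_and, and_true]; first | trivial | omega⟩

def eqv3 : ℤ × ℤ ≃ ℤ × ℤ :=
  ⟨fun p => (p.2 + 1, p.1), fun p => (p.2, p.1 - 1),
    fun p => by obtain ⟨a, b⟩ := p; simp only [Prod.mk.injEq, true_and, and_true]; first | trivial | omega,
    fun p => by obtain ⟨a, b⟩ := p; simp only [Prod.mk.injEq, true_and, and_true]; first | trivial | omega⟩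

def eqv4 : ℤ × ℤ ≃ ℤ × ℤ :=
  ⟨fun p => (-p.2, p.1 + 2 * p.2), fun p => (p.2 + 2 * p.1, -p.1),
    fun p => by obtain ⟨a, b⟩ := p; simp only [Prod.mk.injEq, true_and, and_true]; first | trivial | omega,
    fun p => by obtain ⟨a, b⟩ := p; simp only [Prod.mk.injEq, true_and, and_true]; first | trivial | omega⟩

def eqv5 : ℤ × ℤ ≃ ℤ × ℤ :=
  ⟨fun p => (p.2 + 1, -2 * p.2 - p.1 - 2), fun p => (-2 * p.1 - p.2, p.1 - 1),
    fun p => by obtain ⟨a, b⟩ := p; simp only [Prod.mk.injEq, true_and, and_true]; first | trivial | omega,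
    fun p => by obtain ⟨a, b⟩ := p; simp only [Prod.mk.injEq, true_and, and_true]; first | trivial | omega⟩

lemma keybound1 (m s x y : ℤ) (hm : 1 ≤ m) (hms : 1 ≤ 8 * s - m) :
    x ^ 2 + y ^ 2 ≤ 16 * (8 * m * x ^ 2 + 2 * m * x * y + s * y ^ 2) := by
  nlinarith [sq_nonneg (8 * x + y), sq_nonneg y, sq_nonneg (127 * x + 16 * y),
    mul_nonneg (by linarith : (0:ℤ) ≤ m - 1) (sq_nonneg (8 * x + y)),
    mul_nonneg (by linarith : (0:ℤ) ≤ 8 * s - m - 1) (sq_nonneg y)]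

lemma keybound2 (m s x y : ℤ) (hm : 1 ≤ m) (hms : 1 ≤ 8 * s - m) :
    x ^ 2 + y ^ 2 ≤ 16 * (8 * m * x ^ 2 + 6 * m * x * y + (s + m) * y ^ 2) := by
  nlinarith [sq_nonneg (8 * x + 3 * y), sq_nonneg y, sq_nonneg (127 * x + 48 * y),
    mul_nonneg (by linarith : (0:ℤ) ≤ m - 1) (sq_nonneg (8 * x + 3 * y)),
    mul_nonneg (by linarith : (0:ℤ) ≤ 8 * s - m - 1) (sq_nonneg y)]

lemma int_abs_le_sq (x : ℤ) : (x.natAbs : ℤ) ≤ x ^ 2 := by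
  rw [← Int.abs_eq_natAbs]
  rcases abs_cases x with ⟨h1, h2⟩ | ⟨h1, h2⟩ <;> nlinarith

lemma summable_geo_natAbs {r : ℝ} (h0 : 0 ≤ r) (h1 : r < 1) :
    Summable fun n : ℤ => r ^ n.natAbs := by
  apply Summable.of_nat_of_neg
  · simpa using summable_geometric_of_lt_one h0 h1
  · simpa using summable_geometric_of_lt_one h0 h1

lemma summable_theta (q : ℂ) (hq0 : q ≠ 0) (hq : ‖q‖ < 1) (F : ℤ × ℤ → ℤ)
    (hF : ∀ p : ℤ × ℤ, (p.1.natAbs : ℤ) + p.2.natAbs ≤ 16 * F p) :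
    Summable fun p : ℤ × ℤ => q ^ F p := by
  set r : ℝ := ‖q‖ ^ ((1 : ℝ) / 16) with hr
  have hr0 : 0 ≤ r := Real.rpow_nonneg (norm_nonneg q) _
  have hr1 : r < 1 := Real.rpow_lt_one (norm_nonneg q) hq (by norm_num)
  have hr16 : r ^ (16 : ℕ) = ‖q‖ := by
    rw [hr, ← Real.rpow_natCast (‖q‖ ^ ((1 : ℝ) / 16)) 16, ← Real.rpow_mul (norm_nonneg q)]
    norm_num
  apply Summable.of_norm
  apply Summable.of_nonneg_of_le (fun p => norm_nonneg _) ?_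
    ((summable_geo_natAbs hr0 hr1).mul_of_nonneg (summable_geo_natAbs hr0 hr1)
      (fun n => pow_nonneg hr0 _) (fun n => pow_nonneg hr0 _))
  intro p
  have h := hF p
  have hFp : 0 ≤ F p := by
    have h1 : (0 : ℤ) ≤ (p.1.natAbs : ℤ) + p.2.natAbs := by positivity
    linarith
  rw [show q ^ F p = q ^ (F p).toNat by rw [← zpow_natCast, Int.toNat_of_nonneg hFp],
    norm_pow, ← pow_add, ← hr16, ← pow_mul]
  apply pow_le_pow_of_le_one hr0 hr1.le
  omega

lemma summable_psi_norm (a : ℂ) (ha : ‖a‖ < 1) :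
    Summable fun n : ℤ => ‖a ^ (2 * n ^ 2 - n)‖ := by
  apply Summable.of_nonneg_of_le (fun n => norm_nonneg _) ?_
    (summable_geo_natAbs (norm_nonneg a) ha)
  intro n
  have hE : 0 ≤ 2 * n ^ 2 - n := by nlinarith [sq_nonneg n, sq_nonneg (n - 1)]
  have h2 : (n.natAbs : ℤ) ≤ 2 * n ^ 2 - n := by
    rw [← Int.abs_eq_natAbs]
    rcases abs_cases n with ⟨ha1, ha2⟩ | ⟨ha1, ha2⟩ <;> nlinarith
  rw [show a ^ (2 * n ^ 2 - n) = a ^ (2 * n ^ 2 - n).toNat by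
      rw [← zpow_natCast, Int.toNat_of_nonneg hE], norm_pow]
  exact pow_le_pow_of_le_one (norm_nonneg a) ha.le ((Int.le_toNat hE).2 h2)

lemma neg_one_zpow_even {n : ℤ} (h : Even n) : (-1 : ℂ) ^ n = 1 := Even.neg_one_zpow h

lemma rhs_term (q : ℂ) (hq0 : q ≠ 0) (s c1 c2 n k : ℤ) :
    q ^ s * ((-(q ^ c1)) ^ (2 * n ^ 2 - n) * (-(q ^ c2)) ^ (2 * k ^ 2 - k)) =
      (-1 : ℂ) ^ (n + k) * q ^ (s + c1 * (2 * n ^ 2 - n) + c2 * (2 * k ^ 2 - k)) := by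
  have h1 : (-(q ^ c1)) = (-1 : ℂ) * q ^ c1 := by ring
  have h2 : (-(q ^ c2)) = (-1 : ℂ) * q ^ c2 := by ring
  have e1 : ((-1 : ℂ)) ^ (2 * n ^ 2 - n) = (-1 : ℂ) ^ n := by
    rw [show 2 * n ^ 2 - n = n + 2 * (n ^ 2 - n) by ring,
      zpow_add₀ (by norm_num : (-1 : ℂ) ≠ 0),
      neg_one_zpow_even (⟨n ^ 2 - n, by ring⟩ : Even (2 * (n ^ 2 - n))), mul_one]
  have e2 : ((-1 : ℂ)) ^ (2 * k ^ 2 - k) = (-1 : ℂ) ^ k := by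
    rw [show 2 * k ^ 2 - k = k + 2 * (k ^ 2 - k) by ring,
      zpow_add₀ (by norm_num : (-1 : ℂ) ≠ 0),
      neg_one_zpow_even (⟨k ^ 2 - k, by ring⟩ : Even (2 * (k ^ 2 - k))), mul_one]
  rw [h1, h2, mul_zpow, mul_zpow, e1, e2, ← zpow_mul, ← zpow_mul,
    zpow_add₀ hq0, zpow_add₀ hq0, zpow_add₀ (by norm_num : (-1 : ℂ) ≠ 0)]
  ring

end Aux

set_option maxHeartbeats 1000000 in
theorem thm_8m (m s : ℤ) (hm : 0 < m) (hs : 0 < s) (hms : 0 < 8 * s - m)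
    (q : ℂ) (hq : ‖q‖ < 1) :
    (1 / 2 : ℂ) *
      ((∑' p : ℤ × ℤ, q ^ (8 * m * p.1 ^ 2 + 2 * m * p.1 * p.2 + s * p.2 ^ 2)) -
        ∑' p : ℤ × ℤ, q ^ (8 * m * p.1 ^ 2 + 6 * m * p.1 * p.2 + (s + m) * p.2 ^ 2)) =
      q ^ s * psi (-(q ^ (8 * s - m))) * psi (-(q ^ m)) := by
  have hm1 : (1 : ℤ) ≤ m := hm
  have hms1 : (1 : ℤ) ≤ 8 * s - m := hms
  by_cases hq0 : q = 0
  · -- trivial case q = 0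
    subst hq0
    have hpos : ∀ p : ℤ × ℤ, p ≠ (0, 0) → 0 < p.1 ^ 2 + p.2 ^ 2 := by
      intro p hp
      have : ¬(p.1 = 0 ∧ p.2 = 0) := by
        intro h; exact hp (Prod.ext h.1 h.2)
      rcases not_and_or.mp this with h | h
      · rcases lt_or_gt_of_ne h with h' | h' <;> nlinarith [sq_nonneg p.2]
      · rcases lt_or_gt_of_ne h with h' | h' <;> nlinarith [sq_nonneg p.1]
    have hS1 : (∑' p : ℤ × ℤ, (0 : ℂ) ^ (8 * m * p.1 ^ 2 + 2 * m * p.1 * p.2 + s * p.2 ^ 2))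
        = 1 := by
      rw [tsum_eq_single ((0, 0) : ℤ × ℤ) ?_]
      · norm_num
      · intro p hp
        apply zero_zpow
        have h1 := keybound1 m s p.1 p.2 hm1 hms1
        have h2 := hpos p hp
        intro h3
        rw [h3] at h1
        linarith
    have hS2 : (∑' p : ℤ × ℤ, (0 : ℂ) ^ (8 * m * p.1 ^ 2 + 6 * m * p.1 * p.2
        + (s + m) * p.2 ^ 2)) = 1 := by
      rw [tsum_eq_single ((0, 0) : ℤ × ℤ) ?_]
      · norm_num
      · intro p hp
        apply zero_zpow
        have h1 := keybound2 m s p.1 p.2 hm1 hms1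
        have h2 := hpos p hp
        intro h3
        rw [h3] at h1
        linarith
    rw [hS1, hS2, zero_zpow s (by omega)]
    ring
  -- main case, q ≠ 0
  set c1 : ℤ := 8 * s - m with hc1
  -- abbreviations
  set F1 : ℤ × ℤ → ℂ := fun p => q ^ (8 * m * p.1 ^ 2 + 2 * m * p.1 * p.2 + s * p.2 ^ 2)
    with hF1def
  set F2 : ℤ × ℤ → ℂ := fun p => q ^ (8 * m * p.1 ^ 2 + 6 * m * p.1 * p.2
    + (s + m) * p.2 ^ 2) with hF2def
  set Tev : ℤ × ℤ → ℂ := fun p => q ^ (s + c1 * (2 * p.1 ^ 2 - p.1)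
    + m * (2 * (p.1 + 2 * p.2) ^ 2 - (p.1 + 2 * p.2))) with hTevdef
  set Tod : ℤ × ℤ → ℂ := fun p => q ^ (s + c1 * (2 * p.1 ^ 2 - p.1)
    + m * (2 * (p.1 + 2 * p.2 + 1) ^ 2 - (p.1 + 2 * p.2 + 1))) with hToddef
  -- summability
  have habs : ∀ x y Q : ℤ, x ^ 2 + y ^ 2 ≤ 16 * Q → (x.natAbs : ℤ) + y.natAbs ≤ 16 * Q := by
    intro x y Q h
    have a1 := int_abs_le_sq x
    have a2 := int_abs_le_sq y
    linarith
  have hS1 : Summable F1 :=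
    summable_theta q hq0 hq _ (fun p => habs _ _ _ (keybound1 m s p.1 p.2 hm1 hms1))
  have hS2 : Summable F2 :=
    summable_theta q hq0 hq _ (fun p => habs _ _ _ (keybound2 m s p.1 p.2 hm1 hms1))
  have hS1o : Summable (fun p : ℤ × ℤ => F1 (p.1, 2 * p.2 + 1)) := by
    apply hS1.comp_injective
    intro a b hab
    simp only [Prod.mk.injEq] at hab
    exact Prod.ext hab.1 (by omega)
  have hS2o : Summable (fun p : ℤ × ℤ => F2 (p.1, 2 * p.2 + 1)) := by
    apply hS2.comp_injective
    intro a b hab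
    simp only [Prod.mk.injEq] at hab
    exact Prod.ext hab.1 (by omega)
  -- Step 1 : split both sums by parity of the second coordinate
  have split1 : ∑' p, F1 p = (∑' p : ℤ × ℤ, F1 (p.1, 2 * p.2))
      + ∑' p : ℤ × ℤ, F1 (p.1, 2 * p.2 + 1) := tsum_split F1 hS1 eqvSplit
  have split2 : ∑' p, F2 p = (∑' p : ℤ × ℤ, F2 (p.1, 2 * p.2))
      + ∑' p : ℤ × ℤ, F2 (p.1, 2 * p.2 + 1) := tsum_split F2 hS2 eqvSplit
  -- Step 2 : even parts agree
  have even_eq : (∑' p : ℤ × ℤ, F1 (p.1, 2 * p.2)) = ∑' p : ℤ × ℤ, F2 (p.1, 2 * p.2) := by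
    rw [← Equiv.tsum_eq eqv1 (fun p : ℤ × ℤ => F2 (p.1, 2 * p.2))]
    apply tsum_congr
    intro p
    simp only [hF1def, hF2def, eqv1, Equiv.coe_fn_mk]
    congr 1
    ring
  -- Step 3 : odd parts, split again by parity
  have split1o : (∑' p : ℤ × ℤ, F1 (p.1, 2 * p.2 + 1))
      = (∑' p : ℤ × ℤ, F1 (p.1, 2 * (2 * p.2) + 1))
        + ∑' p : ℤ × ℤ, F1 (p.1, 2 * (2 * p.2 + 1) + 1) :=
    tsum_split _ hS1o eqvSplit
  have split2o : (∑' p : ℤ × ℤ, F2 (p.1, 2 * p.2 + 1))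
      = (∑' p : ℤ × ℤ, F2 (p.1, 2 * (2 * p.2) + 1))
        + ∑' p : ℤ × ℤ, F2 (p.1, 2 * (2 * p.2 + 1) + 1) :=
    tsum_split _ hS2o eqvSplit
  -- Step 4 : the four odd pieces
  have oddA : (∑' p : ℤ × ℤ, F1 (p.1, 2 * (2 * p.2) + 1)) = ∑' p, Tev p := by
    rw [← Equiv.tsum_eq eqv2 Tev]
    apply tsum_congr
    intro p
    simp only [hF1def, hTevdef, eqv2, Equiv.coe_fn_mk, hc1]
    congr 1
    ring
  have oddB : (∑' p : ℤ × ℤ, F1 (p.1, 2 * (2 * p.2 + 1) + 1)) = ∑' p, Tev p := by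
    rw [← Equiv.tsum_eq eqv3 Tev]
    apply tsum_congr
    intro p
    simp only [hF1def, hTevdef, eqv3, Equiv.coe_fn_mk, hc1]
    congr 1
    ring
  have oddC : (∑' p : ℤ × ℤ, F2 (p.1, 2 * (2 * p.2) + 1)) = ∑' p, Tod p := by
    rw [← Equiv.tsum_eq eqv4 Tod]
    apply tsum_congr
    intro p
    simp only [hF2def, hToddef, eqv4, Equiv.coe_fn_mk, hc1]
    congr 1
    ring
  have oddD : (∑' p : ℤ × ℤ, F2 (p.1, 2 * (2 * p.2 + 1) + 1)) = ∑' p, Tod p := by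
    rw [← Equiv.tsum_eq eqv5 Tod]
    apply tsum_congr
    intro p
    simp only [hF2def, hToddef, eqv5, Equiv.coe_fn_mk, hc1]
    congr 1
    ring
  -- Step 5 : the right-hand side
  have hnorm1 : ‖-(q ^ c1)‖ < 1 := by
    rw [norm_neg, show q ^ c1 = q ^ c1.toNat by rw [← zpow_natCast, Int.toNat_of_nonneg hms.le], norm_pow]
    calc ‖q‖ ^ c1.toNat ≤ ‖q‖ ^ 1 := pow_le_pow_of_le_one (norm_nonneg q) hq.le (by omega)
    _ < 1 := by simpa using hq
  have hnorm2 : ‖-(q ^ m)‖ < 1 := by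
    rw [norm_neg, show q ^ m = q ^ m.toNat by rw [← zpow_natCast, Int.toNat_of_nonneg hm.le], norm_pow]
    calc ‖q‖ ^ m.toNat ≤ ‖q‖ ^ 1 := pow_le_pow_of_le_one (norm_nonneg q) hq.le (by omega)
    _ < 1 := by simpa using hq
  have hpsi1 : Summable fun n : ℤ => ‖(-(q ^ c1)) ^ (2 * n ^ 2 - n)‖ :=
    summable_psi_norm _ hnorm1
  have hpsi2 : Summable fun n : ℤ => ‖(-(q ^ m)) ^ (2 * n ^ 2 - n)‖ :=
    summable_psi_norm _ hnorm2
  have hprod : psi (-(q ^ c1)) * psi (-(q ^ m))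
      = ∑' p : ℤ × ℤ, (-(q ^ c1)) ^ (2 * p.1 ^ 2 - p.1) * (-(q ^ m)) ^ (2 * p.2 ^ 2 - p.2) := by
    exact tsum_mul_tsum_of_summable_norm hpsi1 hpsi2
  set G : ℤ × ℤ → ℂ := fun p => q ^ s *
    ((-(q ^ c1)) ^ (2 * p.1 ^ 2 - p.1) * (-(q ^ m)) ^ (2 * p.2 ^ 2 - p.2)) with hGdef
  have hGsum : Summable G := by
    rw [hGdef]
    exact (summable_mul_of_summable_norm hpsi1 hpsi2).mul_left (q ^ s)
  have hrhs1 : q ^ s * psi (-(q ^ c1)) * psi (-(q ^ m)) = ∑' p, G p := by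
    rw [mul_assoc, hprod, ← tsum_mul_left]
  -- split G by parity
  have splitG : ∑' p, G p = (∑' p : ℤ × ℤ, G (p.1, p.1 + 2 * p.2))
      + ∑' p : ℤ × ℤ, G (p.1, p.1 + 2 * p.2 + 1) := tsum_split G hGsum eqvPar
  have hGev : (∑' p : ℤ × ℤ, G (p.1, p.1 + 2 * p.2)) = ∑' p, Tev p := by
    apply tsum_congr
    intro p
    simp only [hGdef, hTevdef]
    rw [rhs_term q hq0 s c1 m p.1 (p.1 + 2 * p.2)]
    rw [neg_one_zpow_even (⟨p.1 + p.2, by ring⟩ : Even (p.1 + (p.1 + 2 * p.2))), one_mul]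
  have hGod : (∑' p : ℤ × ℤ, G (p.1, p.1 + 2 * p.2 + 1)) = -∑' p, Tod p := by
    rw [← tsum_neg]
    apply tsum_congr
    intro p
    simp only [hGdef, hToddef]
    rw [rhs_term q hq0 s c1 m p.1 (p.1 + 2 * p.2 + 1)]
    rw [Odd.neg_one_zpow (⟨p.1 + p.2, by ring⟩ : Odd (p.1 + (p.1 + 2 * p.2 + 1)))]
    ring
  -- conclusion
  rw [split1, split2, even_eq, split1o, split2o, oddA, oddB, oddC, oddD, hrhs1, splitG,
    hGev, hGod]
  ring
end

section
/- Let m, s be positive integers and |q|<1. Then (1/2)·(∑_{x,y∈ℤ} q^{mx²+9sy²} − ∑_{x,y∈ℤ} q^{9mx²+6mxy+(s+m)y²}) = q^m · f(q^{3m}, q^{15m}) · (φ(q^{9s}) − q^s f(q^{3s}, q^{15s})), where f(a,b) = ∑_{n∈ℤ} a^{n(n+1)/2} b^{n(n−1)/2} and φ(q) = ∑_{n∈ℤ} q^{n²}. -/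
open scoped BigOperators

set_option maxHeartbeats 2000000

/-! ### Auxiliary material -/

noncomputable def Tq (q : ℂ) (a r : ℤ) : ℂ := ∑' k : ℤ, q ^ (a * (3 * k + r) ^ 2)

lemma int_abs_le_sq_s18 (t : ℤ) : |t| ≤ t ^ 2 := by
  rcases eq_or_ne t 0 with rfl | h
  · simp
  · have h1 : 1 ≤ |t| := Int.one_le_abs h
    nlinarith [sq_abs t]

lemma normSummable1 {q : ℂ} (hq : ‖q‖ < 1) (hq0 : q ≠ 0)
    (c : ℤ → ℤ) (hc : ∀ n, |n| ≤ c n) : Summable fun n : ℤ => ‖q ^ c n‖ := by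
  have h0 : (0:ℝ) < ‖q‖ := norm_pos_iff.2 hq0
  have hgeo : Summable fun n : ℤ => ‖q‖ ^ n.natAbs := by
    apply Summable.of_nat_of_neg
    · simpa using summable_geometric_of_lt_one (norm_nonneg q) hq
    · simpa using summable_geometric_of_lt_one (norm_nonneg q) hq
  apply Summable.of_nonneg_of_le (fun n => norm_nonneg _) _ hgeo
  intro n
  rw [norm_zpow]
  calc ‖q‖ ^ c n ≤ ‖q‖ ^ (|n|) := zpow_le_zpow_right_of_le_one₀ h0 hq.le (hc n)
    _ = ‖q‖ ^ n.natAbs := by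
        rw [Int.abs_eq_natAbs, zpow_natCast]

lemma normSummable2 {q : ℂ} (hq : ‖q‖ < 1) (hq0 : q ≠ 0)
    (c : ℤ × ℤ → ℤ) (hc : ∀ p, |p.1| + |p.2| ≤ c p) :
    Summable fun p : ℤ × ℤ => ‖q ^ c p‖ := by
  have h0 : (0:ℝ) < ‖q‖ := norm_pos_iff.2 hq0
  have h1 : Summable fun n : ℤ => ‖q‖ ^ (|n|) := by
    have := normSummable1 hq hq0 (fun n => |n|) (fun n => le_refl _)
    refine this.congr fun n => ?_
    rw [norm_zpow]
  have hprod : Summable fun p : ℤ × ℤ => ‖q‖ ^ (|p.1|) * ‖q‖ ^ (|p.2|) :=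
    h1.mul_of_nonneg h1 (fun n => by positivity) (fun n => by positivity)
  apply Summable.of_nonneg_of_le (fun p => norm_nonneg _) _ hprod
  intro p
  rw [norm_zpow]
  calc ‖q‖ ^ c p ≤ ‖q‖ ^ (|p.1| + |p.2|) :=
        zpow_le_zpow_right_of_le_one₀ h0 hq.le (hc p)
    _ = ‖q‖ ^ (|p.1|) * ‖q‖ ^ (|p.2|) := zpow_add₀ h0.ne' _ _

lemma abs_le_shift (k r : ℤ) (h0 : 0 ≤ r) (h2 : r ≤ 2) : |k| ≤ (3 * k + r) ^ 2 := by
  have h1 : |3 * k + r| ≤ (3 * k + r) ^ 2 := int_abs_le_sq_s18 _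
  have h3 : |k| ≤ |3 * k + r| := by
    rcases abs_cases k with ⟨hk, hk'⟩ <;> rcases abs_cases (3 * k + r) with ⟨ht, ht'⟩ <;> omega
  omega

lemma normSummableT {q : ℂ} (hq : ‖q‖ < 1) (hq0 : q ≠ 0)
    (a r : ℤ) (ha : 1 ≤ a) (h0 : 0 ≤ r) (h2 : r ≤ 2) :
    Summable fun k : ℤ => ‖q ^ (a * (3 * k + r) ^ 2)‖ := by
  apply normSummable1 hq hq0
  intro k
  have h1 := abs_le_shift k r h0 h2
  nlinarith [sq_nonneg (3 * k + r)]

lemma normSummableSq {q : ℂ} (hq : ‖q‖ < 1) (hq0 : q ≠ 0)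
    (a : ℤ) (ha : 1 ≤ a) : Summable fun x : ℤ => ‖q ^ (a * x ^ 2)‖ := by
  apply normSummable1 hq hq0
  intro x
  have h1 := int_abs_le_sq_s18 x
  nlinarith [sq_nonneg x]

lemma summable2Sq {q : ℂ} (hq : ‖q‖ < 1) (hq0 : q ≠ 0)
    (a b : ℤ) (ha : 1 ≤ a) (hb : 1 ≤ b) :
    Summable fun p : ℤ × ℤ => q ^ (a * p.1 ^ 2 + b * p.2 ^ 2) := by
  apply Summable.of_norm
  apply normSummable2 hq hq0
  intro p
  have h1 := int_abs_le_sq_s18 p.1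
  have h2 := int_abs_le_sq_s18 p.2
  nlinarith [sq_nonneg p.1, sq_nonneg p.2]

/-- `ℤ ≃ Fin 3 × ℤ` splitting by residues mod 3. -/
def e3 : Fin 3 × ℤ ≃ ℤ where
  toFun p := 3 * p.2 + (p.1 : ℤ)
  invFun n := (⟨(n % 3).toNat, by omega⟩, n / 3)
  left_inv p := by
    obtain ⟨r, k⟩ := p
    have hr : (r : ℤ) < 3 := by exact_mod_cast r.isLt
    have hr0 : (0:ℤ) ≤ (r : ℤ) := by positivity
    refine Prod.ext ?_ ?_
    · apply Fin.ext
      simp only []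
      have : ((3 * k + (r:ℤ)) % 3).toNat = (r : ℕ) := by omega
      simpa using this
    · simp only []
      omega
  right_inv n := by
    simp only []
    omega

/-- shear equivalence `(k, u) ↦ (k, u - k)` -/
def e4 : ℤ × ℤ ≃ ℤ × ℤ where
  toFun p := (p.1, p.2 - p.1)
  invFun p := (p.1, p.2 + p.1)
  left_inv p := by simp
  right_inv p := by simp

/-- `k ↦ -k-1` -/
def e5 : ℤ ≃ ℤ where
  toFun k := -k - 1
  invFun k := -k - 1
  left_inv k := by ring
  right_inv k := by ring

lemma Tq_two {q : ℂ} (a : ℤ) : Tq q a 2 = Tq q a 1 := by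
  unfold Tq
  rw [← e5.tsum_eq (fun k : ℤ => q ^ (a * (3 * k + 2) ^ 2))]
  apply tsum_congr
  intro k
  show q ^ (a * (3 * (-k - 1) + 2) ^ 2) = q ^ (a * (3 * k + 1) ^ 2)
  congr 1
  ring

lemma sumsq_split {q : ℂ} (hq : ‖q‖ < 1) (hq0 : q ≠ 0) (a : ℤ) (ha : 1 ≤ a) :
    (∑' x : ℤ, q ^ (a * x ^ 2)) = Tq q a 0 + Tq q a 1 + Tq q a 2 := by
  have hsum : Summable fun x : ℤ => q ^ (a * x ^ 2) := (normSummableSq hq hq0 a ha).of_norm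
  have h1 : (∑' x : ℤ, q ^ (a * x ^ 2)) =
      ∑' p : Fin 3 × ℤ, q ^ (a * (3 * p.2 + (p.1 : ℤ)) ^ 2) :=
    (e3.tsum_eq (fun x : ℤ => q ^ (a * x ^ 2))).symm
  rw [h1]
  have hsum2 : Summable fun p : Fin 3 × ℤ => q ^ (a * (3 * p.2 + (p.1 : ℤ)) ^ 2) :=
    e3.summable_iff.2 hsum
  rw [Summable.tsum_prod hsum2, tsum_fintype, Fin.sum_univ_three]
  unfold Tq
  norm_num

lemma ramaf_eq {q : ℂ} (hq0 : q ≠ 0) (a : ℤ) :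
    q ^ a * ramaf (q ^ (3 * a)) (q ^ (15 * a)) = Tq q a 1 := by
  unfold ramaf Tq
  rw [← tsum_mul_left]
  rw [← (Equiv.neg ℤ).tsum_eq (fun k : ℤ => q ^ (a * (3 * k + 1) ^ 2))]
  apply tsum_congr
  intro n
  show q ^ a * ((q ^ (3 * a)) ^ (n * (n + 1) / 2) * (q ^ (15 * a)) ^ (n * (n - 1) / 2)) =
    q ^ (a * (3 * -n + 1) ^ 2)
  rw [← zpow_mul, ← zpow_mul, ← zpow_add₀ hq0, ← zpow_add₀ hq0]
  congr 1
  obtain ⟨c1, hc1⟩ := Int.even_mul_succ_self n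
  obtain ⟨c2, hc2⟩ : Even (n * (n - 1)) := by
    have h := Int.even_mul_succ_self (n - 1)
    have : (n - 1) * (n - 1 + 1) = n * (n - 1) := by ring
    rwa [this] at h
  have e1 : n * (n + 1) / 2 = c1 := by omega
  have e2 : n * (n - 1) / 2 = c2 := by omega
  rw [e1, e2]
  have h2 : (2 : ℤ) * (a + (3 * a * c1 + 15 * a * c2)) = 2 * (a * (3 * -n + 1) ^ 2) := by
    linear_combination (-3 * a) * hc1 + (-15 * a) * hc2
  exact mul_left_cancel₀ (by norm_num : (2:ℤ) ≠ 0) h2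

lemma phi_eq {q : ℂ} (s : ℤ) : phi (q ^ (9 * s)) = Tq q s 0 := by
  unfold phi Tq
  apply tsum_congr
  intro n
  rw [← zpow_mul]
  congr 1
  ring

/-- the main reindexing equivalence for the second double sum -/
def Eq2 : Fin 3 × ℤ × ℤ ≃ ℤ × ℤ :=
  (Equiv.prodAssoc (Fin 3) ℤ ℤ).symm.trans
    ((e3.prodCongr (Equiv.refl ℤ)).trans (Equiv.prodComm ℤ ℤ))

lemma sumInnerAux {q : ℂ} (hq : ‖q‖ < 1) (hq0 : q ≠ 0) (m s : ℤ)
    (hm : 1 ≤ m) (hs : 1 ≤ s) (r : ℤ) (h0 : 0 ≤ r) (h2 : r ≤ 2) :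
    (∑' p : ℤ × ℤ, q ^ (m * (3 * p.2 + (3 * p.1 + r)) ^ 2 + s * (3 * p.1 + r) ^ 2)) =
      Tq q s r * Tq q m r := by
  have h1 : (∑' p : ℤ × ℤ, q ^ (m * (3 * p.2 + (3 * p.1 + r)) ^ 2 + s * (3 * p.1 + r) ^ 2)) =
      ∑' p : ℤ × ℤ, q ^ (s * (3 * p.1 + r) ^ 2) * q ^ (m * (3 * p.2 + r) ^ 2) := by
    rw [← e4.tsum_eq (fun p : ℤ × ℤ =>
      q ^ (m * (3 * p.2 + (3 * p.1 + r)) ^ 2 + s * (3 * p.1 + r) ^ 2))]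
    apply tsum_congr
    intro p
    show q ^ (m * (3 * (p.2 - p.1) + (3 * p.1 + r)) ^ 2 + s * (3 * p.1 + r) ^ 2) = _
    rw [← zpow_add₀ hq0]
    congr 1
    ring
  rw [h1, ← tsum_mul_tsum_of_summable_norm (normSummableT hq hq0 s r hs h0 h2)
    (normSummableT hq hq0 m r hm h0 h2)]
  rfl

theorem thm_9m (m s : ℤ) (hm : 0 < m) (hs : 0 < s) (q : ℂ) (hq : ‖q‖ < 1) :
    (1 / 2 : ℂ) *
      ((∑' p : ℤ × ℤ, q ^ (m * p.1 ^ 2 + 9 * s * p.2 ^ 2)) -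
        ∑' p : ℤ × ℤ, q ^ (9 * m * p.1 ^ 2 + 6 * m * p.1 * p.2 + (s + m) * p.2 ^ 2)) =
      q ^ m * ramaf (q ^ (3 * m)) (q ^ (15 * m)) *
        (phi (q ^ (9 * s)) - q ^ s * ramaf (q ^ (3 * s)) (q ^ (15 * s))) := by
  rcases eq_or_ne q 0 with rfl | hq0
  · -- q = 0 : both sides vanish
    have hA : (∑' p : ℤ × ℤ, (0:ℂ) ^ (m * p.1 ^ 2 + 9 * s * p.2 ^ 2)) = 1 := by
      rw [tsum_eq_single ((0:ℤ), (0:ℤ))]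
      · norm_num
      · intro b hb
        have hb' : b.1 ≠ 0 ∨ b.2 ≠ 0 := by
          by_contra h
          push_neg at h
          exact hb (Prod.ext h.1 h.2)
        have hpos : 0 < m * b.1 ^ 2 + 9 * s * b.2 ^ 2 := by
          rcases hb' with h | h
          · have h1 : 1 ≤ b.1 ^ 2 := by nlinarith [Int.one_le_abs h, sq_abs b.1]
            nlinarith [sq_nonneg b.2]
          · have h1 : 1 ≤ b.2 ^ 2 := by nlinarith [Int.one_le_abs h, sq_abs b.2]
            nlinarith [sq_nonneg b.1]
        exact zero_zpow _ hpos.ne'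
    have hB : (∑' p : ℤ × ℤ,
        (0:ℂ) ^ (9 * m * p.1 ^ 2 + 6 * m * p.1 * p.2 + (s + m) * p.2 ^ 2)) = 1 := by
      rw [tsum_eq_single ((0:ℤ), (0:ℤ))]
      · norm_num
      · intro b hb
        have hb' : b.1 ≠ 0 ∨ b.2 ≠ 0 := by
          by_contra h
          push_neg at h
          exact hb (Prod.ext h.1 h.2)
        have hkey : 9 * m * b.1 ^ 2 + 6 * m * b.1 * b.2 + (s + m) * b.2 ^ 2 =
            m * (3 * b.1 + b.2) ^ 2 + s * b.2 ^ 2 := by ring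
        have hpos : 0 < 9 * m * b.1 ^ 2 + 6 * m * b.1 * b.2 + (s + m) * b.2 ^ 2 := by
          rw [hkey]
          rcases eq_or_ne b.2 0 with h2 | h2
          · have h1 : b.1 ≠ 0 := by tauto
            have h3 : 1 ≤ b.1 ^ 2 := by nlinarith [Int.one_le_abs h1, sq_abs b.1]
            have h4 : (3 * b.1 + b.2) ^ 2 = 9 * b.1 ^ 2 := by rw [h2]; ring
            nlinarith [sq_nonneg b.2]
          · have h3 : 1 ≤ b.2 ^ 2 := by nlinarith [Int.one_le_abs h2, sq_abs b.2]
            nlinarith [sq_nonneg (3 * b.1 + b.2)]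
        exact zero_zpow _ hpos.ne'
    rw [hA, hB, zero_zpow m hm.ne']
    ring
  · -- q ≠ 0
    have hm1 : 1 ≤ m := hm
    have hs1 : 1 ≤ s := hs
    -- first double sum
    have hA : (∑' p : ℤ × ℤ, q ^ (m * p.1 ^ 2 + 9 * s * p.2 ^ 2)) =
        (Tq q m 0 + Tq q m 1 + Tq q m 2) * Tq q s 0 := by
      have h1 : (∑' p : ℤ × ℤ, q ^ (m * p.1 ^ 2 + 9 * s * p.2 ^ 2)) =
          ∑' p : ℤ × ℤ, q ^ (m * p.1 ^ 2) * q ^ (9 * s * p.2 ^ 2) :=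
        tsum_congr fun p => by rw [← zpow_add₀ hq0]
      rw [h1, ← tsum_mul_tsum_of_summable_norm (normSummableSq hq hq0 m hm1)
        (normSummableSq hq hq0 (9 * s) (by omega))]
      rw [sumsq_split hq hq0 m hm1]
      congr 1
      unfold Tq
      apply tsum_congr
      intro k
      congr 1
      ring
    -- second double sum
    have hB : (∑' p : ℤ × ℤ,
        q ^ (9 * m * p.1 ^ 2 + 6 * m * p.1 * p.2 + (s + m) * p.2 ^ 2)) =
        Tq q s 0 * Tq q m 0 + Tq q s 1 * Tq q m 1 + Tq q s 2 * Tq q m 2 := by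
      have h1 : (∑' p : ℤ × ℤ,
          q ^ (9 * m * p.1 ^ 2 + 6 * m * p.1 * p.2 + (s + m) * p.2 ^ 2)) =
          ∑' p : ℤ × ℤ, q ^ (m * (3 * p.1 + p.2) ^ 2 + s * p.2 ^ 2) :=
        tsum_congr fun p => by congr 1; ring
      rw [h1]
      -- summability of the second double sum
      have hg : Summable fun p : ℤ × ℤ => q ^ (m * (3 * p.1 + p.2) ^ 2 + s * p.2 ^ 2) := by
        have hF : Summable fun p : ℤ × ℤ => q ^ (m * p.1 ^ 2 + s * p.2 ^ 2) :=
          summable2Sq hq hq0 m s hm1 hs1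
        have hinj : Function.Injective (fun p : ℤ × ℤ => ((3 * p.1 + p.2, p.2) : ℤ × ℤ)) := by
          intro p p' h
          obtain ⟨h1, h2⟩ := Prod.mk.injEq .. ▸ h
          refine Prod.ext ?_ h2
          omega
        have := hF.comp_injective hinj
        exact this
      rw [← Eq2.tsum_eq (fun p : ℤ × ℤ => q ^ (m * (3 * p.1 + p.2) ^ 2 + s * p.2 ^ 2))]
      have hg2 : Summable fun z : Fin 3 × ℤ × ℤ =>
          q ^ (m * (3 * z.2.2 + (3 * z.2.1 + (z.1 : ℤ))) ^ 2 + s * (3 * z.2.1 + (z.1 : ℤ)) ^ 2) :=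
        Eq2.summable_iff.2 hg
      rw [show (fun z : Fin 3 × ℤ × ℤ =>
          (fun p : ℤ × ℤ => q ^ (m * (3 * p.1 + p.2) ^ 2 + s * p.2 ^ 2)) (Eq2 z)) =
          fun z : Fin 3 × ℤ × ℤ =>
          q ^ (m * (3 * z.2.2 + (3 * z.2.1 + (z.1 : ℤ))) ^ 2 + s * (3 * z.2.1 + (z.1 : ℤ)) ^ 2)
        from rfl]
      rw [Summable.tsum_prod hg2, tsum_fintype, Fin.sum_univ_three]
      have hi0 := sumInnerAux hq hq0 m s hm1 hs1 0 (by norm_num) (by norm_num)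
      have hi1 := sumInnerAux hq hq0 m s hm1 hs1 1 (by norm_num) (by norm_num)
      have hi2 := sumInnerAux hq hq0 m s hm1 hs1 2 (by norm_num) (by norm_num)
      norm_num
      norm_num at hi0 hi1 hi2
      rw [hi0, hi1, hi2]
    rw [hA, hB, Tq_two (q := q) m, Tq_two (q := q) s, ramaf_eq hq0 m, ramaf_eq hq0 s,
      phi_eq s]
    ring
end
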